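/- Let α > d/2 and define K_α(x) = (1/(Γ(α)(4π)^{d/2})) ∫₀^∞ t^{α - d/2 - 1} e^{-|x|²/(4t) - t} dt for x ∈ ℝ^d. Then there exist positive constants c, C depending only on α and d such that c e^{-|x|²/4} ≤ K_α(x) ≤ C e^{-|x|/8} for all x ∈ ℝ^d. -/

import Mathlib

open MeasureTheory

/-- The kernel of the operator `(1-Δ)^{-α}` on `ℝ^d`. -/
noncomputable def Kker (d : ℕ) (α : ℝ) (x : EuclideanSpace ℝ (Fin d)) : ℝ :=
  (1 / (Real.Gamma α * (4 * Real.pi) ^ ((d : ℝ) / 2))) *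
    ∫ t in Set.Ioi (0:ℝ), t ^ (α - (d : ℝ) / 2 - 1) * Real.exp (-‖x‖ ^ 2 / (4 * t) - t)

/-!
Both bounds are pointwise comparisons of the integrand `t ^ (a - 1) * exp (-r² / (4t) - t)`,
with `a = α - d/2` and `r = ‖x‖`.  Upper bound: the exponent is at most `-r/2 - t/2`, since the
difference is `((r - t)² + t²) / (4t) ≥ 0`, and what remains is a Gamma integral.  Lower bound: on `t ∈ (1, 2]` the
exponent is at least `-r²/4 - 2` and `t ^ (a - 1)` is bounded below.
-/

open Set Real

noncomputable def besselKernelIntegral (a r : ℝ) : ℝ :=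
  ∫ t in Ioi (0 : ℝ), t ^ (a - 1) * exp (-r ^ 2 / (4 * t) - t)

lemma neg_sq_div_sub_le (r : ℝ) {t : ℝ} (ht : 0 < t) :
    -r ^ 2 / (4 * t) - t ≤ -r / 2 - t / 2 := by
  have : 0 ≤ ((r - t) ^ 2 + t ^ 2) / (4 * t) := by positivity
  have key : -r / 2 - t / 2 - (-r ^ 2 / (4 * t) - t) = ((r - t) ^ 2 + t ^ 2) / (4 * t) := by
    field_simp
    ring
  linarith

lemma integrableOn_rpow_mul_exp_neg_mul {a b : ℝ} (ha : 0 < a) (hb : 0 < b) :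
    IntegrableOn (fun t : ℝ => t ^ (a - 1) * exp (-(b * t))) (Ioi 0) := by
  simpa [rpow_one] using
    integrableOn_rpow_mul_exp_neg_mul_rpow (by linarith : -1 < a - 1) zero_lt_one hb

lemma integrableOn_besselKernelIntegrand {a : ℝ} (ha : 0 < a) (r : ℝ) :
    IntegrableOn (fun t : ℝ => t ^ (a - 1) * exp (-r ^ 2 / (4 * t) - t)) (Ioi 0) := by
  refine (integrableOn_rpow_mul_exp_neg_mul ha one_pos).mono'
    (by fun_prop : Measurable _).aestronglyMeasurable ?_
  filter_upwards [self_mem_ae_restrict measurableSet_Ioi] with t (ht : 0 < t)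
  rw [norm_of_nonneg (by positivity), one_mul]
  gcongr
  have : 0 ≤ r ^ 2 / (4 * t) := by positivity
  rw [neg_div]
  linarith

lemma besselKernelIntegral_le {a : ℝ} (ha : 0 < a) (r : ℝ) :
    besselKernelIntegral a r ≤ 2 ^ a * Gamma a * exp (-r / 2) := by
  have hGamma : ∫ t in Ioi (0 : ℝ), t ^ (a - 1) * exp (-(1 / 2 * t)) = 2 ^ a * Gamma a := by
    rw [integral_rpow_mul_exp_neg_mul_Ioi ha (by norm_num)]
    norm_num
  rw [mul_comm, ← hGamma, ← integral_const_mul]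
  refine setIntegral_mono_on (integrableOn_besselKernelIntegrand ha r)
    ((integrableOn_rpow_mul_exp_neg_mul ha (by norm_num)).const_mul _) measurableSet_Ioi
    fun t (ht : 0 < t) => ?_
  calc t ^ (a - 1) * exp (-r ^ 2 / (4 * t) - t)
      ≤ t ^ (a - 1) * exp (-r / 2 + -(1 / 2 * t)) := by
        gcongr
        linarith [neg_sq_div_sub_le r ht]
    _ = exp (-r / 2) * (t ^ (a - 1) * exp (-(1 / 2 * t))) := by
        rw [exp_add]
        ring

lemma min_one_two_rpow_le_rpow (s : ℝ) {t : ℝ} (ht : t ∈ Ioc (1 : ℝ) 2) :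
    min 1 (2 ^ s) ≤ t ^ s := by
  rcases le_or_gt 0 s with hs | hs
  · exact (min_le_left _ _).trans (one_le_rpow ht.1.le hs)
  · exact (min_le_right _ _).trans (rpow_le_rpow_of_nonpos (one_pos.trans ht.1) ht.2 hs.le)

lemma le_besselKernelIntegral {a : ℝ} (ha : 0 < a) (r : ℝ) :
    min 1 (2 ^ (a - 1)) * exp (-2) * exp (-r ^ 2 / 4) ≤ besselKernelIntegral a r := by
  have hsub : Ioc (1 : ℝ) 2 ⊆ Ioi 0 := fun t ht => one_pos.trans ht.1
  have hint := integrableOn_besselKernelIntegrand ha r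
  calc min 1 (2 ^ (a - 1)) * exp (-2) * exp (-r ^ 2 / 4)
      = ∫ _ in Ioc (1 : ℝ) 2, min 1 (2 ^ (a - 1)) * exp (-2) * exp (-r ^ 2 / 4) := by
        norm_num
    _ ≤ ∫ t in Ioc (1 : ℝ) 2, t ^ (a - 1) * exp (-r ^ 2 / (4 * t) - t) := by
        refine setIntegral_mono_on (integrableOn_const (by simp [volume_Ioc]))
          (hint.mono_set hsub) measurableSet_Ioc fun t ht => ?_
        have ht0 : 0 < t := hsub ht
        rw [mul_assoc, ← exp_add]
        gcongr
        · exact min_one_two_rpow_le_rpow _ ht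
        · have : r ^ 2 / (4 * t) ≤ r ^ 2 / 4 := by gcongr; linarith [ht.1]
          simp only [neg_div]
          linarith [ht.2]
    _ ≤ besselKernelIntegral a r :=
        setIntegral_mono_set hint
          (by filter_upwards [self_mem_ae_restrict measurableSet_Ioi] with t (ht : 0 < t)
              positivity)
          hsub.eventuallyLE

theorem stmt3_general (d : ℕ) (α : ℝ) (hα : (d : ℝ) / 2 < α) :
    ∃ c C : ℝ, 0 < c ∧ 0 < C ∧ ∀ x : EuclideanSpace ℝ (Fin d),
      c * Real.exp (-‖x‖ ^ 2 / 4) ≤ Kker d α x ∧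
      Kker d α x ≤ C * Real.exp (-‖x‖ / 8) := by
  have ha : 0 < α - d / 2 := sub_pos.2 hα
  have hA : 0 < 1 / (Gamma α * (4 * π) ^ ((d : ℝ) / 2)) := by
    have := Gamma_pos_of_pos ((by positivity : (0 : ℝ) ≤ d / 2).trans_lt hα)
    positivity
  have hK (x : EuclideanSpace ℝ (Fin d)) : Kker d α x =
      1 / (Gamma α * (4 * π) ^ ((d : ℝ) / 2)) * besselKernelIntegral (α - d / 2) ‖x‖ := rfl
  have hGamma := Gamma_pos_of_pos ha
  refine ⟨1 / (Gamma α * (4 * π) ^ ((d : ℝ) / 2)) * (min 1 (2 ^ (α - d / 2 - 1)) * exp (-2)),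
    1 / (Gamma α * (4 * π) ^ ((d : ℝ) / 2)) * (2 ^ (α - d / 2) * Gamma (α - d / 2)),
    by positivity, by positivity, fun x => ⟨?_, ?_⟩⟩
  · rw [hK, mul_assoc]
    gcongr
    exact le_besselKernelIntegral ha ‖x‖
  · rw [hK, mul_assoc]
    gcongr
    refine (besselKernelIntegral_le ha ‖x‖).trans ?_
    gcongr _ * exp ?_
    linarith [norm_nonneg x]

theorem stmt3 (d : ℕ) (hd : 1 ≤ d) (α : ℝ) (hα : (d : ℝ) / 2 < α) :
    ∃ c C : ℝ, 0 < c ∧ 0 < C ∧ ∀ x : EuclideanSpace ℝ (Fin d),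
      c * Real.exp (-‖x‖ ^ 2 / 4) ≤ Kker d α x ∧
      Kker d α x ≤ C * Real.exp (-‖x‖ / 8) :=
  stmt3_general d α hα
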